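/- arXiv:2502.00453 — 6 statements merged into one kernel-verified Lean document; each statement's English description precedes it below -/
import Mathlib

section
/- Fix i ≥ 0 and a real-valued function c on ℕ. Define the sequence f by f(i) = c(i)/P(i,i+1) and f(n) = (1/P(n,n+1))·(∑_{k=i}^{n−1} P_n^{(k−)}·f(k) + c(n)) for n ≥ i+1. Then f(n) = ∑_{k=i}^{n} F_n^{(k)}·c(k)/P(k,k+1) for all n ≥ i. -/
open scoped ENNReal
open Filter Topology

/-- `P_n^{(k-)} = ∑_{i=0}^k P(n,i)`. -/
noncomputable def Pminus (P : ℕ → ℕ → ℝ≥0∞) (n k : ℕ) : ℝ≥0∞ :=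
  ∑ l ∈ Finset.range (k + 1), P n l

/-- `F P i n = F_n^{(i)}`: `F_i^{(i)} = 1` and
`F_n^{(i)} = (1/P(n,n+1)) ∑_{k=i}^{n-1} P_n^{(k-)} F_k^{(i)}` for `i < n`. -/
noncomputable def F (P : ℕ → ℕ → ℝ≥0∞) (i : ℕ) : ℕ → ℝ≥0∞
  | n =>
    if n ≤ i then 1
    else (P n (n + 1))⁻¹ *
      ∑ k ∈ (Finset.Ico i n).attach, Pminus P n k.1 * F P i k.1
  termination_by n => n
  decreasing_by
    have h := Finset.mem_Ico.mp k.2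
    omega

lemma Pminus_ne_top (P : ℕ → ℕ → ℝ≥0∞) (hrow : ∀ i, ∑' j : ℕ, P i j = 1)
    (n k : ℕ) : Pminus P n k ≠ ⊤ := by
  have h : Pminus P n k ≤ 1 := by
    rw [← hrow n]
    exact ENNReal.sum_le_tsum _
  exact ne_top_of_le_ne_top ENNReal.one_ne_top h

lemma F_ne_top (P : ℕ → ℕ → ℝ≥0∞) (hrow : ∀ i, ∑' j : ℕ, P i j = 1)
    (hpos : ∀ i : ℕ, 0 < P i (i + 1)) (j : ℕ) : ∀ n, F P j n ≠ ⊤ := by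
  intro n
  induction n using Nat.strong_induction_on with
  | _ n ih =>
    rw [F]
    split
    · exact ENNReal.one_ne_top
    · next h =>
      apply ENNReal.mul_ne_top
      · exact ENNReal.inv_ne_top.mpr (hpos n).ne'
      · rw [Finset.sum_attach (Finset.Ico j n) (fun k => Pminus P n k * F P j k)]
        rw [ENNReal.sum_ne_top]
        intro k hk
        exact ENNReal.mul_ne_top (Pminus_ne_top P hrow n k)
          (ih k (Finset.mem_Ico.mp hk).2)

lemma F_toReal_rec (P : ℕ → ℕ → ℝ≥0∞) (hrow : ∀ i, ∑' j : ℕ, P i j = 1)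
    (hpos : ∀ i : ℕ, 0 < P i (i + 1)) {j n : ℕ} (h : j < n) :
    (F P j n).toReal = (P n (n + 1)).toReal⁻¹ *
      ∑ k ∈ Finset.Ico j n, (Pminus P n k).toReal * (F P j k).toReal := by
  rw [F, if_neg (by omega),
    Finset.sum_attach (Finset.Ico j n) (fun k => Pminus P n k * F P j k),
    ENNReal.toReal_mul, ENNReal.toReal_inv,
    ENNReal.toReal_sum (fun k _ => ENNReal.mul_ne_top (Pminus_ne_top P hrow n k)
      (F_ne_top P hrow hpos j k))]
  simp [ENNReal.toReal_mul]

theorem upward_skip_free_f_representation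
    (P : ℕ → ℕ → ℝ≥0∞) (hrow : ∀ i, ∑' j : ℕ, P i j = 1)
    (hpos : ∀ i : ℕ, 0 < P i (i + 1))
    (hskip : ∀ i k : ℕ, i + 2 ≤ k → P i k = 0)
    (i : ℕ) (c : ℕ → ℝ) (f : ℕ → ℝ)
    (hf0 : f i = c i / (P i (i + 1)).toReal)
    (hfrec : ∀ n, i + 1 ≤ n →
      f n = (P n (n + 1)).toReal⁻¹ *
        ((∑ k ∈ Finset.Ico i n, (Pminus P n k).toReal * f k) + c n)) :
    ∀ n, i ≤ n →
      f n = ∑ k ∈ Finset.Icc i n, (F P k n).toReal * c k / (P k (k + 1)).toReal := by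
  intro n
  induction n using Nat.strong_induction_on with
  | _ n ih =>
    intro hin
    rcases eq_or_lt_of_le hin with rfl | hlt
    · rw [Finset.Icc_self, Finset.sum_singleton, hf0, F, if_pos le_rfl]
      simp [div_eq_mul_inv]
    · rw [hfrec n hlt]
      rw [← Finset.Ico_add_one_right_eq_Icc, Finset.sum_Ico_succ_top (by omega : i ≤ n)]
      have hFnn : (F P n n).toReal = 1 := by rw [F, if_pos le_rfl]; simp
      have hstep : ∀ k ∈ Finset.Ico i n,
          (F P k n).toReal * c k / (P k (k + 1)).toReal
          = (P n (n + 1)).toReal⁻¹ *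
            ∑ m ∈ Finset.Ico k n, (Pminus P n m).toReal *
              ((F P k m).toReal * c k / (P k (k + 1)).toReal) := by
        intro k hk
        rw [F_toReal_rec P hrow hpos (Finset.mem_Ico.mp hk).2]
        simp only [Finset.mul_sum, Finset.sum_mul, Finset.sum_div]
        exact Finset.sum_congr rfl (fun m _ => by ring)
      rw [Finset.sum_congr rfl hstep, ← Finset.mul_sum]
      have hswap : ∑ k ∈ Finset.Ico i n, ∑ m ∈ Finset.Ico k n,
            (Pminus P n m).toReal * ((F P k m).toReal * c k / (P k (k + 1)).toReal)
          = ∑ m ∈ Finset.Ico i n, ∑ k ∈ Finset.Icc i m,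
            (Pminus P n m).toReal * ((F P k m).toReal * c k / (P k (k + 1)).toReal) := by
        apply Finset.sum_comm'
        intro k m
        simp only [Finset.mem_Ico, Finset.mem_Icc]
        omega
      rw [hswap]
      have hinner : ∀ m ∈ Finset.Ico i n,
          ∑ k ∈ Finset.Icc i m,
            (Pminus P n m).toReal * ((F P k m).toReal * c k / (P k (k + 1)).toReal)
          = (Pminus P n m).toReal * f m := by
        intro m hm
        rw [← Finset.mul_sum]
        congr 1
        exact (ih m (Finset.mem_Ico.mp hm).2 (Finset.mem_Ico.mp hm).1).symm
      rw [Finset.sum_congr rfl hinner, hFnn]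
      rw [mul_add]
      ring
end

section
/- Let P be an irreducible upward skip-free transition matrix on ℕ and c : ℕ → [0,∞) a finite nonnegative function. Then the potential satisfies φ(i) = ∑_{m=i}^∞ ∑_{k=0}^{m} F_m^{(k)}·c(k)/P(k,k+1) for every i (equality in [0,∞]); moreover φ(i) < ∞ for all i if and only if φ(0) < ∞. -/
/-!
Put `g(m) = ∑_{k ≤ m} F_m^{(k)} c(k) / P(k,k+1)`. The recursion defining `F` is exactly what makes
`P(m,m+1) g(m) = c(m) + ∑_{k < m} P_m^{(k−)} g(k)`, and from this the tail sums
`∑_{m=j}^{N} g(m)` solve the Poisson equation `x = c + Q_N x` for the chain `Q_N` killed outside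
`{0, …, N}`. Climbing straight up, the killed chain leaves within `N + 1` steps with probability at
least `∏_{j ≤ N} P(j,j+1) > 0` from every state, so bounded solutions are unique and the tail sums
are the potential of `Q_N`. Since the chain moves up by at most one per step, `P^k(i,·)` and
`Q_N^k(i,·)` agree when `i + k ≤ N`, and letting `N → ∞` gives `φ(i) = ∑_{m ≥ i} g(m)`.
In particular `φ` is nonincreasing, which gives the finiteness criterion.
-/

open scoped ENNReal
open Filter Topology

/-- Matrix powers of a nonnegative kernel on ℕ, values in `[0,∞]`. -/
noncomputable def matPow (P : ℕ → ℕ → ℝ≥0∞) : ℕ → ℕ → ℕ → ℝ≥0∞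
  | 0, i, j => if i = j then 1 else 0
  | k + 1, i, j => ∑' l : ℕ, matPow P k i l * P l j

/-- A transition matrix on ℕ: rows sum to one. -/
def IsTransitionMatrix (P : ℕ → ℕ → ℝ≥0∞) : Prop :=
  ∀ i, ∑' j : ℕ, P i j = 1

/-- Irreducibility: every state reaches every state. -/
def MCIrreducible (P : ℕ → ℕ → ℝ≥0∞) : Prop :=
  ∀ i j : ℕ, ∃ k : ℕ, 0 < matPow P k i j

/-- Upward skip-free: `P(i,i+1) > 0` and `P(i,k) = 0` for `k ≥ i+2`. -/
def UpwardSkipFree (P : ℕ → ℕ → ℝ≥0∞) : Prop :=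
  (∀ i : ℕ, 0 < P i (i + 1)) ∧ ∀ i k : ℕ, i + 2 ≤ k → P i k = 0

/-- The potential `φ(i) = ∑_{k=0}^∞ ∑_j P^k(i,j) c(j)`. -/
noncomputable def potential (P : ℕ → ℕ → ℝ≥0∞) (c : ℕ → ℝ≥0∞) (i : ℕ) : ℝ≥0∞ :=
  ∑' k : ℕ, ∑' j : ℕ, matPow P k i j * c j

open Finset

section Kernel

variable (R : ℕ → ℕ → ℝ≥0∞)

lemma matPow_zero_apply (i j : ℕ) : matPow R 0 i j = if i = j then 1 else 0 := by
  rw [matPow]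

lemma matPow_succ_apply (k i j : ℕ) : matPow R (k + 1) i j = ∑' l, matPow R k i l * R l j := by
  rw [matPow]

lemma tsum_matPow_zero_mul (i : ℕ) (x : ℕ → ℝ≥0∞) : ∑' j, matPow R 0 i j * x j = x i := by
  rw [tsum_eq_single i fun j hj => by rw [matPow_zero_apply, if_neg hj.symm, zero_mul],
    matPow_zero_apply, if_pos rfl, one_mul]

lemma tsum_matPow_succ_mul (k i : ℕ) (x : ℕ → ℝ≥0∞) :
    ∑' j, matPow R (k + 1) i j * x j = ∑' l, matPow R k i l * ∑' j, R l j * x j := by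
  simp_rw [matPow_succ_apply, ← ENNReal.tsum_mul_right, ← ENNReal.tsum_mul_left, mul_assoc]
  exact ENNReal.tsum_comm

lemma tsum_matPow_add_mul (a b i : ℕ) (x : ℕ → ℝ≥0∞) :
    ∑' j, matPow R (a + b) i j * x j = ∑' l, matPow R a i l * ∑' j, matPow R b l j * x j := by
  induction b generalizing x with
  | zero => simp_rw [Nat.add_zero, tsum_matPow_zero_mul]
  | succ b ih => simp_rw [← Nat.add_assoc, tsum_matPow_succ_mul, ih]

lemma matPow_one_apply (i j : ℕ) : matPow R 1 i j = R i j := by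
  rw [matPow_succ_apply]
  exact tsum_matPow_zero_mul R i (R · j)

lemma matPow_mono {R' : ℕ → ℕ → ℝ≥0∞} (h : ∀ i j, R i j ≤ R' i j) (k i j : ℕ) :
    matPow R k i j ≤ matPow R' k i j := by
  induction k generalizing j with
  | zero => rw [matPow_zero_apply, matPow_zero_apply]
  | succ k ih =>
    rw [matPow_succ_apply, matPow_succ_apply]
    exact ENNReal.tsum_le_tsum fun l => mul_le_mul' (ih l) (h l j)

lemma tsum_matPow_eq_one (hR : IsTransitionMatrix R) (k i : ℕ) : ∑' j, matPow R k i j = 1 := by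
  induction k generalizing i with
  | zero => simpa using tsum_matPow_zero_mul R i 1
  | succ k ih => simpa [hR _, ih] using tsum_matPow_succ_mul R k i 1

lemma tsum_matPow_antitone (hR : ∀ i, ∑' j, R i j ≤ 1) (i : ℕ) :
    Antitone fun n => ∑' j, matPow R n i j := by
  refine antitone_nat_of_succ_le fun n => ?_
  have h := tsum_matPow_succ_mul R n i 1
  simp only [Pi.one_apply, mul_one] at h
  rw [h]
  exact ENNReal.tsum_le_tsum fun l => mul_le_of_le_one_right' (hR l)

lemma tsum_matPow_mul_le_pow {m : ℕ} {q : ℝ≥0∞} (hmass : ∀ i, ∑' j, matPow R m i j ≤ q)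
    (k i : ℕ) : ∑' j, matPow R (k * m) i j ≤ q ^ k := by
  induction k generalizing i with
  | zero => simpa using (tsum_matPow_zero_mul R i 1).le
  | succ k ih =>
    have hsplit := tsum_matPow_add_mul R m (k * m) i 1
    simp only [Pi.one_apply, mul_one] at hsplit
    calc ∑' j, matPow R ((k + 1) * m) i j
        = ∑' l, matPow R m i l * ∑' j, matPow R (k * m) l j := by rw [← hsplit]; ring_nf
      _ ≤ ∑' l, matPow R m i l * q ^ k := ENNReal.tsum_le_tsum fun l => by gcongr; exact ih l
      _ ≤ q * q ^ k := by rw [ENNReal.tsum_mul_right]; gcongr; exact hmass i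
      _ = q ^ (k + 1) := (pow_succ' q k).symm

lemma eq_sum_add_of_fixedPoint {b x : ℕ → ℝ≥0∞} (hx : ∀ i, x i = b i + ∑' j, R i j * x j)
    (n i : ℕ) :
    x i = ∑ k ∈ range n, ∑' j, matPow R k i j * b j + ∑' j, matPow R n i j * x j := by
  induction n with
  | zero => rw [sum_range_zero, zero_add, tsum_matPow_zero_mul]
  | succ n ih =>
    rw [sum_range_succ, add_assoc, tsum_matPow_succ_mul, ← ENNReal.tsum_add]
    simp_rw [← mul_add, ← hx]
    exact ih

lemma potential_le_of_fixedPoint {b x : ℕ → ℝ≥0∞} (hx : ∀ i, x i = b i + ∑' j, R i j * x j)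
    (i : ℕ) : potential R b i ≤ x i := by
  rw [potential, ENNReal.tsum_eq_iSup_nat]
  exact iSup_le fun n => (eq_sum_add_of_fixedPoint R hx n i).symm ▸ le_self_add

theorem eq_potential_of_fixedPoint {m : ℕ} {q : ℝ≥0∞} (hq : q < 1)
    (hmass : ∀ i, ∑' j, matPow R m i j ≤ q) {b x : ℕ → ℝ≥0∞}
    (hx : ∀ i, x i = b i + ∑' j, R i j * x j) {M : ℝ≥0∞} (hM : M ≠ ∞) (hxM : ∀ i, x i ≤ M)
    (i : ℕ) : x i = potential R b i := by
  refine le_antisymm ?_ (potential_le_of_fixedPoint R hx i)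
  have hbound (k : ℕ) : x i ≤ potential R b i + M * q ^ k := by
    rw [eq_sum_add_of_fixedPoint R hx (k * m) i]
    gcongr
    · exact ENNReal.sum_le_tsum _
    · calc ∑' j, matPow R (k * m) i j * x j ≤ ∑' j, matPow R (k * m) i j * M :=
            ENNReal.tsum_le_tsum fun j => by gcongr; exact hxM j
        _ = M * ∑' j, matPow R (k * m) i j := by rw [ENNReal.tsum_mul_right, mul_comm]
        _ ≤ M * q ^ k := by gcongr; exact tsum_matPow_mul_le_pow R hmass k i
  have hlim : Tendsto (fun k => potential R b i + M * q ^ k) atTop (𝓝 (potential R b i)) := by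
    simpa using tendsto_const_nhds.add
      (ENNReal.Tendsto.const_mul (ENNReal.tendsto_pow_atTop_nhds_zero_of_lt_one hq) (Or.inr hM))
  exact ge_of_tendsto' hlim hbound

end Kernel

section SkipFree

variable {P : ℕ → ℕ → ℝ≥0∞}

lemma matPow_eq_zero_of_lt (hup : UpwardSkipFree P) {k i j : ℕ} (h : i + k < j) :
    matPow P k i j = 0 := by
  induction k generalizing j with
  | zero => rw [matPow_zero_apply, if_neg (by omega)]
  | succ k ih =>
    refine (matPow_succ_apply P k i j).trans <| ENNReal.tsum_eq_zero.mpr fun l => ?_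
    rcases le_or_gt l (i + k) with hl | hl
    · rw [hup.2 l j (by omega), mul_zero]
    · rw [ih hl, zero_mul]

lemma prod_le_matPow (P : ℕ → ℕ → ℝ≥0∞) (r i : ℕ) :
    ∏ t ∈ range r, P (i + t) (i + t + 1) ≤ matPow P r i (i + r) := by
  induction r with
  | zero => simp [matPow_zero_apply]
  | succ r ih =>
    rw [prod_range_succ, matPow_succ_apply, ← add_assoc]
    exact (mul_le_mul' ih le_rfl).trans (ENNReal.le_tsum (i + r))

end SkipFree

/-- The sub-stochastic kernel of the chain killed on leaving `{0, …, N}`. -/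
noncomputable def truncKernel (P : ℕ → ℕ → ℝ≥0∞) (N : ℕ) : ℕ → ℕ → ℝ≥0∞ :=
  fun i j => if i ≤ N ∧ j ≤ N then P i j else 0

section Truncation

variable {P : ℕ → ℕ → ℝ≥0∞} {N : ℕ}

lemma truncKernel_le (i j : ℕ) : truncKernel P N i j ≤ P i j := by
  unfold truncKernel
  split_ifs <;> simp

lemma matPow_truncKernel_of_lt {i j : ℕ} (hi : i ≤ N) (hj : N < j) (k : ℕ) :
    matPow (truncKernel P N) k i j = 0 := by
  cases k with
  | zero => rw [matPow_zero_apply, if_neg (by omega)]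
  | succ k =>
    refine (matPow_succ_apply _ k i j).trans <| ENNReal.tsum_eq_zero.mpr fun l => ?_
    rw [truncKernel, if_neg (by omega), mul_zero]

lemma matPow_truncKernel_of_add_le (hup : UpwardSkipFree P) {k i : ℕ} (h : i + k ≤ N) (j : ℕ) :
    matPow (truncKernel P N) k i j = matPow P k i j := by
  induction k generalizing j with
  | zero => rw [matPow_zero_apply, matPow_zero_apply]
  | succ k ih =>
    rw [matPow_succ_apply, matPow_succ_apply]
    refine tsum_congr fun l => ?_
    rw [ih (by omega)]
    rcases le_or_gt l (i + k) with hl | hl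
    · by_cases hj : j ≤ N
      · rw [truncKernel, if_pos ⟨by omega, hj⟩]
      · rw [truncKernel, if_neg (by omega), hup.2 l j (by omega)]
    · rw [matPow_eq_zero_of_lt hup hl, zero_mul, zero_mul]

lemma tsum_matPow_truncKernel_add_le (hP : IsTransitionMatrix P) {i : ℕ} (hi : i ≤ N) (r : ℕ) :
    ∑' j, matPow (truncKernel P N) r i j + matPow P r i (N + 1) ≤ 1 := by
  rw [← tsum_ite_eq (N + 1) (fun _ => matPow P r i (N + 1)), ← ENNReal.tsum_add,
    ← tsum_matPow_eq_one P hP r i]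
  refine ENNReal.tsum_le_tsum fun j => ?_
  split_ifs with hj
  · rw [hj, matPow_truncKernel_of_lt hi (by omega), zero_add]
  · rw [add_zero]
    exact matPow_mono _ truncKernel_le r i j

lemma tsum_matPow_truncKernel_le (hP : IsTransitionMatrix P) (i : ℕ) :
    ∑' j, matPow (truncKernel P N) (N + 1) i j ≤ 1 - ∏ j ∈ range (N + 1), P j (j + 1) := by
  rcases le_or_gt i N with hi | hi
  · set r := N + 1 - i
    have hprod : ∏ j ∈ range (N + 1), P j (j + 1) ≤ matPow P r i (N + 1) := by
      rw [show N + 1 = i + r by omega, prod_range_add]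
      refine (mul_le_of_le_one_left' ?_).trans (prod_le_matPow P r i)
      exact prod_le_one' fun j _ => (ENNReal.le_tsum _).trans (hP j).le
    calc ∑' j, matPow (truncKernel P N) (N + 1) i j
        ≤ ∑' j, matPow (truncKernel P N) r i j :=
          tsum_matPow_antitone _ (fun l => (ENNReal.tsum_le_tsum (truncKernel_le l)).trans (hP l).le)
            i (by omega)
      _ ≤ 1 - matPow P r i (N + 1) :=
          ENNReal.le_sub_of_add_le_right (ne_top_of_le_ne_top ENNReal.one_ne_top
            (le_add_self.trans (tsum_matPow_truncKernel_add_le hP hi r)))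
            (tsum_matPow_truncKernel_add_le hP hi r)
      _ ≤ 1 - ∏ j ∈ range (N + 1), P j (j + 1) := tsub_le_tsub_left hprod 1
  · have hrow : ∀ l, matPow (truncKernel P N) 1 i l = 0 := fun l => by
      rw [matPow_one_apply, truncKernel, if_neg (by omega)]
    have h := tsum_matPow_add_mul (truncKernel P N) 1 N i 1
    simp only [hrow, zero_mul, tsum_zero, Pi.one_apply, mul_one] at h
    rw [add_comm, h]
    exact zero_le

end Truncation

section PassageCost

variable {P : ℕ → ℕ → ℝ≥0∞} {c : ℕ → ℝ≥0∞}

lemma F_of_le (P : ℕ → ℕ → ℝ≥0∞) {i n : ℕ} (h : n ≤ i) : F P i n = 1 := by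
  rw [F, if_pos h]

lemma mul_F_of_lt (hP : IsTransitionMatrix P) (hup : UpwardSkipFree P) {i n : ℕ} (h : i < n) :
    P n (n + 1) * F P i n = ∑ k ∈ Ico i n, Pminus P n k * F P i k := by
  rw [F, if_neg (by omega), ← mul_assoc,
    ENNReal.mul_inv_cancel (hup.1 n).ne' (ne_top_of_le_ne_top ENNReal.one_ne_top
      ((ENNReal.le_tsum _).trans (hP n).le)), one_mul]
  exact sum_attach (Ico i n) fun k => Pminus P n k * F P i k

lemma F_ne_top_s3 (hP : IsTransitionMatrix P) (hup : UpwardSkipFree P) (i n : ℕ) : F P i n ≠ ∞ := by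
  induction n using Nat.strong_induction_on with
  | _ n ih =>
    rw [F]
    split_ifs
    · exact ENNReal.one_ne_top
    refine ENNReal.mul_ne_top (ENNReal.inv_ne_top.mpr (hup.1 n).ne') ?_
    refine ENNReal.sum_ne_top.mpr fun k hk => ENNReal.mul_ne_top ?_ (ih k (mem_Ico.mp k.2).2)
    exact ne_top_of_le_ne_top ENNReal.one_ne_top ((ENNReal.sum_le_tsum _).trans (hP n).le)

lemma Pminus_add_self (hP : IsTransitionMatrix P) (hup : UpwardSkipFree P) (n : ℕ) :
    Pminus P n n + P n (n + 1) = 1 := by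
  rw [Pminus, ← sum_range_succ, ← hP n]
  exact (tsum_eq_sum fun l hl => hup.2 n l (by simp at hl; omega)).symm

lemma Pminus_eq_one (hP : IsTransitionMatrix P) (hup : UpwardSkipFree P) {n m : ℕ} (h : n < m) :
    Pminus P n m = 1 := by
  rw [Pminus, ← sum_range_add_sum_Ico _ (by omega : n + 2 ≤ m + 1),
    sum_eq_zero fun l hl => hup.2 n l (mem_Ico.mp hl).1, add_zero, sum_range_succ]
  exact Pminus_add_self hP hup n

/-- `g(m)`, the expected cost collected from `m` before the chain first reaches `m + 1`;
it is `φ(m) - φ(m + 1)`. -/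
noncomputable def passageCost (P : ℕ → ℕ → ℝ≥0∞) (c : ℕ → ℝ≥0∞) (m : ℕ) : ℝ≥0∞ :=
  ∑ k ∈ range (m + 1), F P k m * c k / P k (k + 1)

lemma passageCost_ne_top (hP : IsTransitionMatrix P) (hup : UpwardSkipFree P)
    (hc : ∀ j, c j ≠ ∞) (m : ℕ) : passageCost P c m ≠ ∞ :=
  ENNReal.sum_ne_top.mpr fun k _ =>
    ENNReal.div_ne_top (ENNReal.mul_ne_top (F_ne_top_s3 hP hup k m) (hc k)) (hup.1 k).ne'

lemma mul_passageCost (hP : IsTransitionMatrix P) (hup : UpwardSkipFree P) (i : ℕ) :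
    P i (i + 1) * passageCost P c i =
      c i + ∑ m ∈ range i, Pminus P i m * passageCost P c m := by
  have hPi : P i (i + 1) ≠ ∞ :=
    ne_top_of_le_ne_top ENNReal.one_ne_top ((ENNReal.le_tsum _).trans (hP i).le)
  rw [passageCost, sum_range_succ, F_of_le P (le_refl i), one_mul, mul_add,
    ENNReal.mul_div_cancel (hup.1 i).ne' hPi, add_comm, mul_sum]
  congr 1
  calc ∑ k ∈ range i, P i (i + 1) * (F P k i * c k / P k (k + 1))
      = ∑ k ∈ range i, ∑ m ∈ Ico k i, Pminus P i m * F P k m * (c k / P k (k + 1)) := by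
        refine sum_congr rfl fun k hk => ?_
        rw [mul_div_assoc, ← mul_assoc, mul_F_of_lt hP hup (mem_range.mp hk), sum_mul]
    _ = ∑ m ∈ range i, ∑ k ∈ range (m + 1), Pminus P i m * F P k m * (c k / P k (k + 1)) :=
        sum_comm' fun k m => by simp only [mem_range, mem_Ico]; omega
    _ = ∑ m ∈ range i, Pminus P i m * passageCost P c m := by
        simp only [passageCost, mul_sum, mul_assoc, mul_div_assoc]

lemma passageCost_eq (hP : IsTransitionMatrix P) (hup : UpwardSkipFree P) (i : ℕ) :
    passageCost P c i = c i + ∑ m ∈ range (i + 1), Pminus P i m * passageCost P c m := by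
  rw [sum_range_succ, ← add_assoc, ← mul_passageCost hP hup, ← add_mul, add_comm,
    Pminus_add_self hP hup, one_mul]

end PassageCost

section Formula

variable {P : ℕ → ℕ → ℝ≥0∞} {c : ℕ → ℝ≥0∞}

lemma sum_Ico_passageCost_eq (hP : IsTransitionMatrix P) (hup : UpwardSkipFree P) {N j : ℕ}
    (hj : j ≤ N) :
    ∑ m ∈ Ico j (N + 1), passageCost P c m =
      c j + ∑ l ∈ range (N + 1), P j l * ∑ m ∈ Ico l (N + 1), passageCost P c m := by
  have hswap : ∑ l ∈ range (N + 1), P j l * ∑ m ∈ Ico l (N + 1), passageCost P c m =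
      ∑ m ∈ range (N + 1), Pminus P j m * passageCost P c m := by
    simp only [mul_sum, Pminus, sum_mul]
    exact sum_comm' fun l m => by simp only [mem_range, mem_Ico]; omega
  rw [hswap, ← sum_range_add_sum_Ico _ (by omega : j + 1 ≤ N + 1), ← add_assoc,
    ← passageCost_eq hP hup, sum_eq_sum_Ico_succ_bot (by omega : j < N + 1)]
  congr 1
  exact sum_congr rfl fun m hm => by rw [Pminus_eq_one hP hup (mem_Ico.mp hm).1, one_mul]

lemma potential_truncKernel (hP : IsTransitionMatrix P) (hup : UpwardSkipFree P)
    (hc : ∀ j, c j ≠ ∞) {N i : ℕ} (hi : i ≤ N) :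
    potential (truncKernel P N) c i = ∑ m ∈ Ico i (N + 1), passageCost P c m := by
  set S : ℕ → ℝ≥0∞ := fun j => ∑ m ∈ Ico j (N + 1), passageCost P c m
  -- both cut off outside `{0, …, N}`, so that the solution `x` is bounded
  set x : ℕ → ℝ≥0∞ := fun j => if j ≤ N then S j else 0
  set b : ℕ → ℝ≥0∞ := fun j => if j ≤ N then c j else 0
  have hfix (j : ℕ) : x j = b j + ∑' l, truncKernel P N j l * x l := by
    by_cases hj : j ≤ N
    · simp only [x, b, S, if_pos hj]
      rw [sum_Ico_passageCost_eq hP hup hj, tsum_eq_sum (s := range (N + 1)) fun l hl => by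
        simp [truncKernel, show ¬l ≤ N by simpa using hl]]
      exact congrArg _ (sum_congr rfl fun l hl => by
        simp [truncKernel, hj, show l ≤ N by simpa [Nat.lt_succ_iff] using hl])
    · simp [x, b, hj, truncKernel]
  have hb : potential (truncKernel P N) b i = potential (truncKernel P N) c i :=
    tsum_congr fun k => tsum_congr fun j => by
      by_cases hj : j ≤ N
      · simp [b, hj]
      · rw [matPow_truncKernel_of_lt hi (by omega), zero_mul, zero_mul]
  have hq : 1 - ∏ j ∈ range (N + 1), P j (j + 1) < 1 :=
    ENNReal.sub_lt_self ENNReal.one_ne_top one_ne_zero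
      (prod_ne_zero_iff.mpr fun j _ => (hup.1 j).ne')
  have hM : S 0 ≠ ∞ := ENNReal.sum_ne_top.mpr fun m _ => passageCost_ne_top hP hup hc m
  have hxM (j : ℕ) : x j ≤ S 0 := by
    by_cases hj : j ≤ N
    · simp only [x, S, if_pos hj]
      exact sum_le_sum_of_subset (Ico_subset_Ico_left (Nat.zero_le j))
    · simp [x, hj]
  rw [← hb, ← eq_potential_of_fixedPoint _ hq (tsum_matPow_truncKernel_le hP) hfix hM hxM i]
  simp [x, hi, S]

lemma potential_eq_tsum_passageCost (hP : IsTransitionMatrix P) (hup : UpwardSkipFree P)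
    (hc : ∀ j, c j ≠ ∞) (i : ℕ) :
    potential P c i = ∑' m : {m : ℕ // i ≤ m}, passageCost P c m := by
  have hshift : ∑' m : {m : ℕ // i ≤ m}, passageCost P c m = ∑' t, passageCost P c (i + t) := by
    refine (Function.Injective.tsum_eq (f := fun m : {m : ℕ // i ≤ m} => passageCost P c m)
      (g := fun t => ⟨i + t, Nat.le_add_right i t⟩) (fun s t h => by simpa using h)
      fun m _ => ⟨m.1 - i, Subtype.ext (by simp [Nat.add_sub_cancel' m.2])⟩).symm
  have htrunc (n : ℕ) :
      potential (truncKernel P (i + n)) c i = ∑ t ∈ range (n + 1), passageCost P c (i + t) := by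
    rw [potential_truncKernel hP hup hc (Nat.le_add_right i n), sum_Ico_eq_sum_range,
      show i + n + 1 - i = n + 1 by omega]
  rw [hshift]
  refine le_antisymm ?_ (ENNReal.tsum_le_of_sum_range_le fun n => ?_)
  · rw [potential, ENNReal.tsum_eq_iSup_nat]
    refine iSup_le fun n => ?_
    calc ∑ k ∈ range n, ∑' j, matPow P k i j * c j
        = ∑ k ∈ range n, ∑' j, matPow (truncKernel P (i + n)) k i j * c j :=
          sum_congr rfl fun k hk => by
            have hk : i + k ≤ i + n := by simp at hk; omega
            simp_rw [matPow_truncKernel_of_add_le hup hk]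
      _ ≤ potential (truncKernel P (i + n)) c i := ENNReal.sum_le_tsum _
      _ = ∑ t ∈ range (n + 1), passageCost P c (i + t) := htrunc n
      _ ≤ ∑' t, passageCost P c (i + t) := ENNReal.sum_le_tsum _
  · calc ∑ t ∈ range n, passageCost P c (i + t)
        ≤ ∑ t ∈ range (n + 1), passageCost P c (i + t) :=
          sum_le_sum_of_subset (range_subset_range.mpr n.le_succ)
      _ = potential (truncKernel P (i + n)) c i := (htrunc n).symm
      _ ≤ potential P c i := ENNReal.tsum_le_tsum fun k => ENNReal.tsum_le_tsum fun j =>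
          mul_le_mul' (matPow_mono _ truncKernel_le k i j) le_rfl

end Formula

theorem potential_of_upward_skip_free_general
    (P : ℕ → ℕ → ℝ≥0∞) (hP : IsTransitionMatrix P)
    (hup : UpwardSkipFree P)
    (c : ℕ → ℝ≥0∞) (hc : ∀ j, c j ≠ ∞) :
    (∀ i : ℕ, potential P c i =
        ∑' m : {m : ℕ // i ≤ m}, ∑ k ∈ Finset.range (m.1 + 1),
          F P k m.1 * c k / P k (k + 1)) ∧
    ((∀ i : ℕ, potential P c i < ∞) ↔ potential P c 0 < ∞) := by
  have hφ := potential_eq_tsum_passageCost hP hup hc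
  refine ⟨hφ, fun h => h 0, fun h0 i => ?_⟩
  calc potential P c i = ∑' m : {m : ℕ // i ≤ m}, passageCost P c m := hφ i
    _ ≤ ∑' m : {m : ℕ // 0 ≤ m}, passageCost P c m :=
        ENNReal.tsum_mono_subtype (passageCost P c) fun m (_ : i ≤ m) => Nat.zero_le m
    _ = potential P c 0 := (hφ 0).symm
    _ < ∞ := h0

theorem potential_of_upward_skip_free
    (P : ℕ → ℕ → ℝ≥0∞) (hP : IsTransitionMatrix P) (hirr : MCIrreducible P)
    (hup : UpwardSkipFree P)
    (c : ℕ → ℝ≥0∞) (hc : ∀ j, c j ≠ ∞) :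
    (∀ i : ℕ, potential P c i =
        ∑' m : {m : ℕ // i ≤ m}, ∑ k ∈ Finset.range (m.1 + 1),
          F P k m.1 * c k / P k (k + 1)) ∧
    ((∀ i : ℕ, potential P c i < ∞) ↔ potential P c 0 < ∞) :=
  potential_of_upward_skip_free_general P hP hup c hc
end

section
/- Fix n ≥ 1 and a real-valued function c on ℕ. Define the sequence h by h(n+1) = 0 and h(i) = (1/P(i,i−1))·(∑_{k=i+1}^{n} P_i^{(k+)}·h(k) + c(i)) for 1 ≤ i ≤ n (defined by downward recursion from i = n). Then h(i) = ∑_{k=i}^{n} H_i^{(k)}·c(k)/P(k,k−1) for all 1 ≤ i ≤ n. -/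
open scoped ENNReal
open Filter Topology

/-- `P_m^{(k+)} = ∑_{i=k}^∞ P(m,i)`. -/
noncomputable def Pplus (P : ℕ → ℕ → ℝ≥0∞) (m k : ℕ) : ℝ≥0∞ :=
  ∑' l : ℕ, P m (k + l)

/-- `H P i m = H_m^{(i)}`: `H_i^{(i)} = 1` and
`H_m^{(i)} = (1/P(m,m-1)) ∑_{k=m+1}^{i} P_m^{(k+)} H_k^{(i)}` for `1 ≤ m < i`. -/
noncomputable def H (P : ℕ → ℕ → ℝ≥0∞) (i : ℕ) : ℕ → ℝ≥0∞
  | m =>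
    if i ≤ m then 1
    else (P m (m - 1))⁻¹ *
      ∑ k ∈ (Finset.Ioc m i).attach, Pplus P m k.1 * H P i k.1
  termination_by m => i - m
  decreasing_by
    have h := Finset.mem_Ioc.mp k.2
    omega

lemma H_self (P : ℕ → ℕ → ℝ≥0∞) (i : ℕ) : H P i i = 1 := by
  rw [H]; simp

lemma H_eq (P : ℕ → ℕ → ℝ≥0∞) {i m : ℕ} (hm : m < i) :
    H P i m = (P m (m - 1))⁻¹ * ∑ k ∈ Finset.Ioc m i, Pplus P m k * H P i k := by
  rw [H, if_neg (by omega), Finset.sum_attach (Finset.Ioc m i)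
    (fun k => Pplus P m k * H P i k)]

lemma Pplus_le_one (P : ℕ → ℕ → ℝ≥0∞) (hrow : ∀ i, ∑' j : ℕ, P i j = 1)
    (m k : ℕ) : Pplus P m k ≤ 1 := by
  rw [← hrow m]
  exact ENNReal.tsum_comp_le_tsum_of_injective (fun a b hab => by omega) _

lemma H_ne_top (P : ℕ → ℕ → ℝ≥0∞) (hrow : ∀ i, ∑' j : ℕ, P i j = 1)
    (hpos : ∀ i : ℕ, 1 ≤ i → 0 < P i (i - 1)) (i : ℕ) :
    ∀ d m, 1 ≤ m → i - m ≤ d → H P i m ≠ ⊤ := by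
  intro d
  induction d with
  | zero => intro m hm hd; rw [H, if_pos (by omega)]; exact ENNReal.one_ne_top
  | succ d ih =>
    intro m hm hd
    by_cases hcase : i ≤ m
    · rw [H, if_pos hcase]; exact ENNReal.one_ne_top
    · rw [H_eq P (by omega)]
      apply ENNReal.mul_ne_top
      · exact ENNReal.inv_ne_top.mpr (hpos m hm).ne'
      · apply (ENNReal.sum_lt_top.mpr _).ne
        intro k hk
        have hk' := Finset.mem_Ioc.mp hk
        exact (ENNReal.mul_ne_top ((Pplus_le_one P hrow m k).trans_lt ENNReal.one_lt_top).ne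
          (ih k (by omega) (by omega))).lt_top

theorem downward_skip_free_h_representation
    (P : ℕ → ℕ → ℝ≥0∞) (hrow : ∀ i, ∑' j : ℕ, P i j = 1)
    (hpos : ∀ i : ℕ, 1 ≤ i → 0 < P i (i - 1))
    (hskip : ∀ i k : ℕ, k + 2 ≤ i → P i k = 0)
    (n : ℕ) (hn : 1 ≤ n) (c : ℕ → ℝ) (h : ℕ → ℝ)
    (hh0 : h (n + 1) = 0)
    (hhrec : ∀ i, 1 ≤ i → i ≤ n →
      h i = (P i (i - 1)).toReal⁻¹ *
        ((∑ k ∈ Finset.Ioc i n, (Pplus P i k).toReal * h k) + c i)) :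
    ∀ i, 1 ≤ i → i ≤ n →
      h i = ∑ k ∈ Finset.Icc i n, (H P k i).toReal * c k / (P k (k - 1)).toReal := by
  have hfin : ∀ j m, 1 ≤ m → H P j m ≠ ⊤ :=
    fun j m hm => H_ne_top P hrow hpos j (j - m) m hm le_rfl
  have hptop : ∀ m k, Pplus P m k ≠ ⊤ :=
    fun m k => ((Pplus_le_one P hrow m k).trans_lt ENNReal.one_lt_top).ne
  have Hreal : ∀ j m, 1 ≤ m → m < j →
      (H P j m).toReal = (P m (m - 1)).toReal⁻¹ *
        ∑ k ∈ Finset.Ioc m j, (Pplus P m k).toReal * (H P j k).toReal := by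
    intro j m hm hmj
    rw [H_eq P hmj, ENNReal.toReal_mul, ENNReal.toReal_inv,
      ENNReal.toReal_sum (fun k hk => ENNReal.mul_ne_top (hptop m k)
        (hfin j k (by have := Finset.mem_Ioc.mp hk; omega)))]
    simp [ENNReal.toReal_mul]
  suffices key : ∀ d i, 1 ≤ i → i ≤ n → n - i ≤ d →
      h i = ∑ k ∈ Finset.Icc i n, (H P k i).toReal * c k / (P k (k - 1)).toReal by
    intro i h1 h2; exact key (n - i) i h1 h2 le_rfl
  intro d
  induction d using Nat.strong_induction_on with
  | _ d ih =>
  intro i hi1 hin hd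
  have hIH : ∀ k, i < k → k ≤ n →
      h k = ∑ j ∈ Finset.Icc k n, (H P j k).toReal * c j / (P j (j - 1)).toReal := by
    intro k hk1 hk2
    exact ih (n - k) (by omega) k (by omega) hk2 le_rfl
  rw [hhrec i hi1 hin, Finset.Icc_eq_cons_Ioc hin, Finset.sum_cons, H_self]
  have step1 : ∑ k ∈ Finset.Ioc i n, (Pplus P i k).toReal * h k
      = ∑ j ∈ Finset.Ioc i n,
          (∑ k ∈ Finset.Ioc i j, (Pplus P i k).toReal * (H P j k).toReal) *
            (c j / (P j (j - 1)).toReal) := by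
    rw [Finset.sum_congr rfl (fun k hk => by
      have := Finset.mem_Ioc.mp hk
      rw [hIH k this.1 this.2, Finset.mul_sum])]
    rw [Finset.sum_comm' (s := Finset.Ioc i n) (t := fun k => Finset.Icc k n)
      (s' := fun j => Finset.Ioc i j) (t' := Finset.Ioc i n)
      (fun k j => by simp only [Finset.mem_Ioc, Finset.mem_Icc]; omega)]
    refine Finset.sum_congr rfl fun j hj => ?_
    rw [Finset.sum_mul]
    exact Finset.sum_congr rfl fun k hk => by ring
  rw [step1, mul_add, Finset.mul_sum]
  have hji : ∀ j ∈ Finset.Ioc i n,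
      (P i (i - 1)).toReal⁻¹ *
        ((∑ k ∈ Finset.Ioc i j, (Pplus P i k).toReal * (H P j k).toReal) *
          (c j / (P j (j - 1)).toReal))
      = (H P j i).toReal * c j / (P j (j - 1)).toReal := by
    intro j hj
    have := Finset.mem_Ioc.mp hj
    rw [← mul_assoc, ← Hreal j i hi1 this.1]; ring
  rw [Finset.sum_congr rfl hji, ENNReal.toReal_one]
  ring
end

section
/- For the embedded chain P of the GI/M/1 queue with parameter z > 1, the quantities F_n^{(i)} satisfy F_n^{(i)} = 1/(z·(z−1)^{n−i}) for all 0 ≤ i < n. -/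
/-!
For `k ≤ n` the lower tail of row `n` of the GI/M/1 chain is `P_n^{(k-)} = z^k / z^(n+1)`, so on
the columns `k < n` the lower tails of row `n + 1` are those of row `n` scaled by `1/z`. The
recursion for `F_{n+1}^{(i)}` therefore only involves `F_n^{(i)}`, and works out to
`F_{n+1}^{(i)} = F_n^{(i)} / (z - 1)`; with `F_{i+1}^{(i)} = 1 / (z (z - 1))` this gives the formula.
-/

open scoped ENNReal
open Filter Topology

/-- The Green matrix `G(i,j) = ∑_{k=0}^∞ P^k(i,j)`. -/
noncomputable def green (P : ℕ → ℕ → ℝ≥0∞) (i j : ℕ) : ℝ≥0∞ :=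
  ∑' k : ℕ, matPow P k i j

/-- The embedded chain of the `GI/M/1` queue with parameter `z`:
`P(i,0) = b_i = 1/z^(i+1)`, `P(i,j) = a_{i+1-j} = (z-1)/z^(i+2-j)` for `1 ≤ j ≤ i+1`,
and `P(i,j) = 0` for `j > i+1`. -/
noncomputable def giM1 (z : ℝ) : ℕ → ℕ → ℝ≥0∞ := fun i j =>
  if j = 0 then ENNReal.ofReal (1 / z ^ (i + 1))
  else if j ≤ i + 1 then ENNReal.ofReal ((z - 1) / z ^ (i + 2 - j))
  else 0

namespace F

variable {P : ℕ → ℕ → ℝ≥0∞} {i n : ℕ}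

lemma of_le (h : n ≤ i) : F P i n = 1 := by
  rw [F, if_pos h]

lemma of_lt (h : i < n) :
    F P i n = (P n (n + 1))⁻¹ * ∑ k ∈ Finset.Ico i n, Pminus P n k * F P i k := by
  rw [F, if_neg h.not_ge, Finset.sum_attach _ fun k => Pminus P n k * F P i k]

lemma mul_of_lt (h0 : P n (n + 1) ≠ 0) (htop : P n (n + 1) ≠ ⊤) (h : i < n) :
    P n (n + 1) * F P i n = ∑ k ∈ Finset.Ico i n, Pminus P n k * F P i k := by
  rw [of_lt h, ← mul_assoc, ENNReal.mul_inv_cancel h0 htop, one_mul]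

lemma succ_of_Pminus_succ_eq_mul {c : ℝ≥0∞} (h0 : P n (n + 1) ≠ 0) (htop : P n (n + 1) ≠ ⊤)
    (h : i < n) (hc : ∀ k ∈ Finset.Ico i n, Pminus P (n + 1) k = c * Pminus P n k) :
    F P i (n + 1) =
      (P (n + 1) (n + 2))⁻¹ * ((c * P n (n + 1) + Pminus P (n + 1) n) * F P i n) := by
  rw [of_lt (h.trans (Nat.lt_add_one n)), Finset.sum_Ico_succ_top h.le,
    Finset.sum_congr rfl fun k hk => by rw [hc k hk, mul_assoc], ← Finset.mul_sum,
    ← mul_of_lt h0 htop h]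
  ring

end F

section giM1

variable {z : ℝ}

lemma giM1_apply_succ (n : ℕ) : giM1 z n (n + 1) = ENNReal.ofReal ((z - 1) / z) := by
  simp [giM1]

lemma Pminus_giM1 (hz : 1 ≤ z) {n k : ℕ} (hk : k ≤ n) :
    Pminus (giM1 z) n k = ENNReal.ofReal (z ^ k / z ^ (n + 1)) := by
  have hz0 : 0 < z := one_pos.trans_le hz
  induction k with
  | zero => simp [Pminus, giM1]
  | succ k ih =>
    have hP : giM1 z n (k + 1) = ENNReal.ofReal (z ^ k * (z - 1) / z ^ (n + 1)) := by
      have hpow : z ^ (n + 1) = z ^ k * z ^ (n + 1 - k) := by rw [← pow_add]; congr 1; omega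
      simp [giM1, show k + 1 ≤ n + 1 by omega, show n + 2 - (k + 1) = n + 1 - k by omega, hpow,
        mul_div_mul_left _ _ (pow_ne_zero k hz0.ne')]
    rw [Pminus, Finset.sum_range_succ, ← Pminus, ih (by omega), hP,
      ← ENNReal.ofReal_add (by positivity) (by have := sub_nonneg.2 hz; positivity)]
    congr 1
    ring

lemma F_giM1_succ_self (hz : 1 < z) (i : ℕ) :
    F (giM1 z) i (i + 1) = ENNReal.ofReal (1 / (z * (z - 1))) := by
  have hz0 : 0 < z := one_pos.trans hz
  have hz1 : 0 < z - 1 := sub_pos.2 hz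
  rw [F.of_lt (Nat.lt_add_one i), Nat.Ico_succ_singleton, Finset.sum_singleton, F.of_le le_rfl,
    mul_one, giM1_apply_succ, Pminus_giM1 hz.le (Nat.le_add_right i 1),
    ← ENNReal.ofReal_inv_of_pos (by positivity), ← ENNReal.ofReal_mul (by positivity)]
  congr 1
  field_simp
  ring

lemma F_giM1_succ (hz : 1 < z) {i n : ℕ} (h : i < n) :
    F (giM1 z) i (n + 1) = ENNReal.ofReal (1 / (z - 1)) * F (giM1 z) i n := by
  have hz0 : 0 < z := one_pos.trans hz
  have hz1 : 0 < z - 1 := sub_pos.2 hz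
  have hscale : ∀ k ∈ Finset.Ico i n,
      Pminus (giM1 z) (n + 1) k = ENNReal.ofReal (1 / z) * Pminus (giM1 z) n k := by
    intro k hk
    rw [Pminus_giM1 hz.le (by grind), Pminus_giM1 hz.le (by grind),
      ← ENNReal.ofReal_mul (by positivity)]
    congr 1
    field_simp
    ring
  rw [F.succ_of_Pminus_succ_eq_mul (by simp [giM1_apply_succ, hz0, hz1]) (by simp [giM1_apply_succ])
    h hscale, ← mul_assoc, giM1_apply_succ, giM1_apply_succ, Pminus_giM1 hz.le (Nat.le_add_right n 1),
    ← ENNReal.ofReal_inv_of_pos (by positivity), ← ENNReal.ofReal_mul (by positivity),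
    ← ENNReal.ofReal_add (by positivity) (by positivity), ← ENNReal.ofReal_mul (by positivity)]
  congr 2
  field_simp
  ring

end giM1

theorem giM1_F_formula (z : ℝ) (hz : 1 < z) :
    ∀ i n : ℕ, i < n →
      F (giM1 z) i n = ENNReal.ofReal (1 / (z * (z - 1) ^ (n - i))) := by
  have hz1 : 0 < z - 1 := sub_pos.2 hz
  intro i n hin
  induction n, hin using Nat.le_induction with
  | base => simpa using F_giM1_succ_self hz i
  | succ n hn ih =>
    rw [F_giM1_succ hz hn, ih, ← ENNReal.ofReal_mul (by positivity),
      show n + 1 - i = n - i + 1 by omega]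
    congr 1
    field_simp
    ring
end

section
/- For the embedded chain P of the M/G/1 queue with parameter z > 1, the quantities H_m^{(i)} satisfy H_m^{(i)} = 1/(z·(z−1)^{i−m}) for all 1 ≤ m < i, and P_0^{(k+)} = z^{−k} for all k ≥ 1. -/
open scoped ENNReal
open Filter Topology

/-- The ratio `r_n(i) = (∑_{m=i+1}^n H_m^{(n)}) / (∑_{k=1}^n P_0^{(k+)} H_k^{(n)})`. -/
noncomputable def ratio (P : ℕ → ℕ → ℝ≥0∞) (i n : ℕ) : ℝ :=
  (∑ m ∈ Finset.Icc (i + 1) n, (H P n m).toReal) /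
    (∑ k ∈ Finset.Icc 1 n, (Pplus P 0 k).toReal * (H P n k).toReal)

/-- The embedded chain of the `M/G/1` queue with parameter `z`:
`P(0,j) = a_j = (z-1)/z^(j+1)`, and for `i ≥ 1`, `P(i,j) = a_{j-i+1} = (z-1)/z^(j-i+2)`
for `j ≥ i-1` and `P(i,j) = 0` for `j < i-1`. -/
noncomputable def mG1 (z : ℝ) : ℕ → ℕ → ℝ≥0∞ := fun i j =>
  if i = 0 then ENNReal.ofReal ((z - 1) / z ^ (j + 1))
  else if i - 1 ≤ j then ENNReal.ofReal ((z - 1) / z ^ (j - (i - 1) + 1))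
  else 0

/-! The M/G/1 chain has geometric arrivals: with `q = 1/z`, row `m ≥ 1` is
`P(m, j) = (1 - q) q^(j+1-m)`, so every tail sum is a pure power `P_m^{(k+)} = q^(k+1-m)`, and
row `0` coincides with row `1`. Since the tails of rows `m` and `m + 1` differ by the factor `q`,
the recursion for `H_m^{(i)}` collapses onto its own first term:
`H_m^{(i)} = P(m,m-1)⁻¹ (P_m^{((m+1)+)} + q P(m+1,m)) H_{m+1}^{(i)}`
`= (1-q)⁻¹ q H_{m+1}^{(i)}`, and `(1-q)⁻¹ q = 1/(z-1)`. -/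

open Finset

namespace H

variable {P : ℕ → ℕ → ℝ≥0∞} {i m : ℕ}

theorem of_le (h : i ≤ m) : H P i m = 1 := by
  rw [H, if_pos h]

theorem of_lt (h : m < i) :
    H P i m = (P m (m - 1))⁻¹ * ∑ k ∈ Ioc m i, Pplus P m k * H P i k := by
  rw [H, if_neg h.not_ge, sum_attach (Ioc m i) fun k => Pplus P m k * H P i k]

theorem pred_self (m : ℕ) : H P (m + 1) m = (P m (m - 1))⁻¹ * Pplus P m (m + 1) := by
  rw [of_lt m.lt_succ_self, Nat.Ioc_succ_singleton, sum_singleton, of_le le_rfl, mul_one]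

/-- The tail sum is recognised, through the recursion for `H_{m+1}^{(i)}`, as
`P(m+1,m) H_{m+1}^{(i)}`. -/
theorem eq_mul_succ_of_Pplus_eq_mul {c : ℝ≥0∞} (hmi : m + 1 < i)
    (h0 : P (m + 1) m ≠ 0) (htop : P (m + 1) m ≠ ⊤)
    (hc : ∀ k ∈ Ioc (m + 1) i, Pplus P m k = c * Pplus P (m + 1) k) :
    H P i m = (P m (m - 1))⁻¹ * (Pplus P m (m + 1) + c * P (m + 1) m) * H P i (m + 1) := by
  have htail :
      ∑ k ∈ Ioc (m + 1) i, Pplus P (m + 1) k * H P i k = P (m + 1) m * H P i (m + 1) := by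
    rw [of_lt hmi, Nat.add_sub_cancel, ← mul_assoc, ENNReal.mul_inv_cancel h0 htop, one_mul]
  have hsplit : Ioc m i = cons (m + 1) (Ioc (m + 1) i) (by simp) := by
    rw [← Icc_eq_cons_Ioc hmi.le, Icc_add_one_left_eq_Ioc]
  rw [of_lt (by omega), hsplit, sum_cons, sum_congr rfl fun k hk => by rw [hc k hk, mul_assoc],
    ← mul_sum, htail]
  ring

end H

section GeometricArrivals

variable {P : ℕ → ℕ → ℝ≥0∞} {q : ℝ≥0∞}

theorem diag_eq_of_geometric
    (hP : ∀ m j, 1 ≤ m → m ≤ j + 1 → P m j = (1 - q) * q ^ (j + 1 - m))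
    {m : ℕ} (hm : 1 ≤ m) : P m (m - 1) = 1 - q := by
  rw [hP m (m - 1) hm (by omega), show m - 1 + 1 - m = 0 by omega, pow_zero, mul_one]

theorem Pplus_eq_pow_of_geometric (hq : q < 1)
    (hP : ∀ m j, 1 ≤ m → m ≤ j + 1 → P m j = (1 - q) * q ^ (j + 1 - m))
    {m k : ℕ} (hm : 1 ≤ m) (hmk : m ≤ k) : Pplus P m k = q ^ (k + 1 - m) := by
  have hterm : ∀ l, P m (k + l) = (1 - q) * q ^ (k + 1 - m) * q ^ l := fun l => by
    rw [hP m (k + l) hm (by omega), mul_assoc, ← pow_add]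
    congr 2
    omega
  rw [Pplus, funext hterm, ENNReal.tsum_mul_left, ENNReal.tsum_geometric, mul_comm (1 - q),
    mul_assoc, ENNReal.mul_inv_cancel (tsub_pos_of_lt hq).ne'
      (ENNReal.sub_ne_top ENNReal.one_ne_top), mul_one]

theorem Pplus_eq_mul_Pplus_succ_of_geometric (hq : q < 1)
    (hP : ∀ m j, 1 ≤ m → m ≤ j + 1 → P m j = (1 - q) * q ^ (j + 1 - m))
    {m k : ℕ} (hm : 1 ≤ m) (hmk : m + 1 ≤ k) : Pplus P m k = q * Pplus P (m + 1) k := by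
  rw [Pplus_eq_pow_of_geometric hq hP hm (by omega),
    Pplus_eq_pow_of_geometric hq hP (by omega) hmk, ← pow_succ']
  congr 1
  omega

theorem H_eq_pow_of_geometric (hq : q < 1)
    (hP : ∀ m j, 1 ≤ m → m ≤ j + 1 → P m j = (1 - q) * q ^ (j + 1 - m))
    {m i : ℕ} (hm : 1 ≤ m) (hmi : m < i) : H P i m = q * ((1 - q)⁻¹ * q) ^ (i - m) := by
  have hsub_ne_zero : 1 - q ≠ 0 := (tsub_pos_of_lt hq).ne'
  have hsub_ne_top : 1 - q ≠ ⊤ := ENNReal.sub_ne_top ENNReal.one_ne_top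
  obtain ⟨d, rfl⟩ : ∃ d, i = m + 1 + d := ⟨i - m - 1, by omega⟩
  induction d generalizing m with
  | zero =>
    rw [add_zero, H.pred_self, diag_eq_of_geometric hP hm,
      Pplus_eq_pow_of_geometric hq hP hm m.le_succ, show m + 1 + 1 - m = 2 by omega,
      Nat.add_sub_cancel_left]
    ring
  | succ d ih =>
    have hdiag : P (m + 1) m = 1 - q := diag_eq_of_geometric hP (m := m + 1) (by omega)
    rw [show m + 1 + (d + 1) = m + 1 + 1 + d by omega,
      H.eq_mul_succ_of_Pplus_eq_mul (c := q) (by omega) (hdiag ▸ hsub_ne_zero)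
        (hdiag ▸ hsub_ne_top)
        fun k hk => Pplus_eq_mul_Pplus_succ_of_geometric hq hP hm (mem_Ioc.mp hk).1.le,
      ih (m := m + 1) (by omega) (by omega), diag_eq_of_geometric hP hm, hdiag,
      Pplus_eq_pow_of_geometric hq hP hm (by omega), show m + 1 + 1 - m = 2 by omega,
      show m + 1 + 1 + d - (m + 1) = d + 1 by omega, show m + 1 + 1 + d - m = d + 2 by omega]
    calc (1 - q)⁻¹ * (q ^ 2 + q * (1 - q)) * (q * ((1 - q)⁻¹ * q) ^ (d + 1))
        = (1 - q)⁻¹ * q * (q + (1 - q)) * (q * ((1 - q)⁻¹ * q) ^ (d + 1)) := by ring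
      _ = q * ((1 - q)⁻¹ * q) ^ (d + 2) := by rw [add_tsub_cancel_of_le hq.le]; ring

end GeometricArrivals

section MG1

theorem mG1_zero_row (z : ℝ) : mG1 z 0 = mG1 z 1 := by
  funext j
  simp [mG1]

variable {z : ℝ}

theorem one_sub_ofReal_inv (hz : 1 < z) :
    1 - ENNReal.ofReal z⁻¹ = ENNReal.ofReal ((z - 1) / z) := by
  rw [← ENNReal.ofReal_one, ← ENNReal.ofReal_sub _ (by positivity)]
  congr 1
  field_simp

theorem mG1_eq_geometric (hz : 1 < z) (m j : ℕ) (hm : 1 ≤ m) (hmj : m ≤ j + 1) :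
    mG1 z m j = (1 - ENNReal.ofReal z⁻¹) * ENNReal.ofReal z⁻¹ ^ (j + 1 - m) := by
  rw [one_sub_ofReal_inv hz, ← ENNReal.ofReal_pow (by positivity),
    ← ENNReal.ofReal_mul (by positivity), mG1, if_neg (by omega), if_pos (by omega),
    show j - (m - 1) + 1 = j + 1 - m + 1 by omega, pow_succ, inv_pow]
  congr 1
  field_simp

theorem ofReal_inv_lt_one (hz : 1 < z) : ENNReal.ofReal z⁻¹ < 1 := by
  rw [ENNReal.ofReal_lt_one]
  exact inv_lt_one_of_one_lt₀ hz

end MG1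

theorem mG1_H_and_Pplus_formula (z : ℝ) (hz : 1 < z) :
    (∀ m i : ℕ, 1 ≤ m → m < i →
      H (mG1 z) i m = ENNReal.ofReal (1 / (z * (z - 1) ^ (i - m)))) ∧
    (∀ k : ℕ, 1 ≤ k → Pplus (mG1 z) 0 k = ENNReal.ofReal (1 / z ^ k)) := by
  have hq := ofReal_inv_lt_one hz
  have hP := mG1_eq_geometric hz
  refine ⟨fun m i hm hmi => ?_, fun k hk => ?_⟩
  · rw [H_eq_pow_of_geometric hq hP hm hmi, one_sub_ofReal_inv hz,
      ← ENNReal.ofReal_inv_of_pos (by positivity), ← ENNReal.ofReal_mul (by positivity),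
      ← ENNReal.ofReal_pow (by positivity), ← ENNReal.ofReal_mul (by positivity)]
    congr 1
    field_simp
    rw [div_pow, one_pow]
  · have hrow : Pplus (mG1 z) 0 k = Pplus (mG1 z) 1 k := by rw [Pplus, Pplus, mG1_zero_row]
    rw [hrow, Pplus_eq_pow_of_geometric hq hP le_rfl hk, Nat.add_sub_cancel,
      ← ENNReal.ofReal_pow (by positivity), inv_pow, one_div]
end

section
/- For the embedded chain P of the M/G/1 queue with parameter z > 1, the ratio sequence r_n(i) := (∑_{m=i+1}^{n} H_m^{(n)})/(∑_{k=1}^{n} P_0^{(k+)}·H_k^{(n)}) satisfies: if 1 < z < 2 then lim_{n→∞} r_n(i) = (z−1)^i/(2−z) for every i ≥ 0, while if z ≥ 2 then r_n(i) → +∞ as n → ∞ for every i ≥ 0. Consequently the chain is transient if and only if 1 < z < 2. -/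
open scoped ENNReal
open Filter Topology

/-!
Everything is explicit for this chain. Every row is a shift of the memoryless geometric law
`a_k = (z - 1) / z^(k+1)`, so `P_m^{(k+)} = z^{-(k+1-m)}` and the recursion for `H` telescopes to
`H_m^{(n)} = (z - 1)^m / (z (z - 1)^n)` for `1 ≤ m < n`. The denominator of `r_n(i)` then
collapses to `(z - 1) / (z (z - 1)^n)`, so that `r_n(i) = ∑_{m=i}^{n} (z - 1)^m` for `n > i`, a
geometric partial sum that converges exactly when `z < 2`.

For `z < 2`, `l ↦ (z / 2)^l` is finite and strictly superharmonic, and such a function bounds the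
Green matrix. For `z ≥ 2`, memorylessness turns the first-step equations for `v i = G(i, 0)` into
`v 0 = 1 + v 1` and `z v (i+1) = (z - 1) v i + v (i+2)`, so `v i - v (i+1) = (z - 1)^i ≥ 1` and
`v 0 ≥ n` for every `n`, which is impossible if `G(·, 0)` is finite.
-/

section Kernel

variable (P : ℕ → ℕ → ℝ≥0∞)

theorem matPow_succ_left (k i j : ℕ) :
    matPow P (k + 1) i j = ∑' l, P i l * matPow P k l j := by
  induction k generalizing j with
  | zero => simp [matPow]
  | succ k ih =>
    calc matPow P (k + 2) i j = ∑' l, (∑' m, P i m * matPow P k m l) * P l j := by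
          simp_rw [matPow, ← ih]; rfl
      _ = ∑' m, P i m * ∑' l, matPow P k m l * P l j := by
          simp_rw [← ENNReal.tsum_mul_right, ← ENNReal.tsum_mul_left, mul_assoc]
          exact ENNReal.tsum_comm
      _ = ∑' m, P i m * matPow P (k + 1) m j := rfl

theorem green_eq_ite_add_tsum (i j : ℕ) :
    green P i j = (if i = j then 1 else 0) + ∑' l, P i l * green P l j := by
  rw [green, tsum_eq_zero_add' ENNReal.summable]
  simp_rw [matPow_succ_left, green, ← ENNReal.tsum_mul_left]
  rw [ENNReal.tsum_comm]
  rfl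

theorem green_mul_le {h : ℕ → ℝ≥0∞} {j : ℕ} {c : ℝ≥0∞}
    (hh : ∀ i, (if i = j then c else 0) + ∑' l, P i l * h l ≤ h i) (i : ℕ) :
    green P i j * c ≤ h i := by
  suffices ∀ N i, ∑ k ∈ Finset.range N, matPow P k i j * c ≤ h i by
    rw [green, ← ENNReal.tsum_mul_right, ENNReal.tsum_eq_iSup_nat]
    exact iSup_le fun N => this N i
  intro N
  induction N with
  | zero => simp
  | succ N ih =>
    intro i
    calc ∑ k ∈ Finset.range (N + 1), matPow P k i j * c
        = ∑' l, P i l * ∑ k ∈ Finset.range N, matPow P k l j * c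
          + (if i = j then c else 0) := by
          rw [Finset.sum_range_succ']
          simp_rw [matPow_succ_left, ENNReal.tsum_mul_right.symm, Finset.mul_sum,
            Summable.tsum_finsetSum (fun _ _ => ENNReal.summable), mul_assoc]
          congr 1
          simp [matPow]
      _ ≤ ∑' l, P i l * h l + (if i = j then c else 0) := by
          gcongr with l
          exact ih l
      _ ≤ h i := by rw [add_comm]; exact hh i

theorem green_lt_top_of_tsum_lt {h : ℕ → ℝ≥0∞} (hfin : ∀ i, h i ≠ ∞)
    (hlt : ∀ i, ∑' l, P i l * h l < h i) (i j : ℕ) : green P i j < ∞ := by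
  set c := h j - ∑' l, P j l * h l
  have hc : c ≠ 0 := (tsub_pos_of_lt (hlt j)).ne'
  have hle : green P i j * c ≤ h i := by
    refine green_mul_le P (fun i => ?_) i
    split_ifs with hij
    · subst hij
      exact (tsub_add_cancel_of_le (hlt i).le).le
    · simpa using (hlt i).le
  exact ENNReal.lt_top_of_mul_ne_top_left (ne_top_of_le_ne_top (hfin i) hle) hc

theorem H_of_le {n m : ℕ} (h : n ≤ m) : H P n m = 1 := by
  rw [H, if_pos h]

theorem H_of_lt {n m : ℕ} (h : m < n) :
    H P n m = (P m (m - 1))⁻¹ * ∑ k ∈ Finset.Ioc m n, Pplus P m k * H P n k := by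
  rw [H, if_neg h.not_ge, Finset.sum_attach (Finset.Ioc m n) fun k => Pplus P m k * H P n k]

end Kernel

theorem tendsto_sum_Ico_pow_of_lt_one {r : ℝ} (h0 : 0 ≤ r) (h1 : r < 1) (i : ℕ) :
    Tendsto (fun n => ∑ m ∈ Finset.Ico i (n + 1), r ^ m) atTop (𝓝 (r ^ i / (1 - r))) := by
  have h := (((tendsto_pow_atTop_nhds_zero_of_lt_one h0 h1).comp
    (tendsto_add_atTop_nat 1)).sub_const (r ^ i)).div_const (r - 1)
  rw [zero_sub, neg_div, ← div_neg, neg_sub] at h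
  exact h.congr' ((eventually_ge_atTop i).mono fun n hn =>
    (geom_sum_Ico h1.ne (Nat.le_succ_of_le hn)).symm)

theorem tendsto_sum_Ico_pow_atTop {r : ℝ} (h : 1 ≤ r) (i : ℕ) :
    Tendsto (fun n => ∑ m ∈ Finset.Ico i (n + 1), r ^ m) atTop atTop := by
  refine tendsto_atTop_mono (fun n => ?_) (tendsto_natCast_atTop_atTop.comp
    ((tendsto_sub_atTop_nat i).comp (tendsto_add_atTop_nat 1)))
  simpa using Finset.card_nsmul_le_sum (Finset.Ico i (n + 1)) (r ^ ·) 1 fun m _ => one_le_pow₀ h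

theorem sub_succ_eq_pow_of_recurrence {r : ℝ} {v : ℕ → ℝ} (h0 : v 0 = 1 + v 1)
    (hrec : ∀ i, (1 + r) * v (i + 1) = r * v i + v (i + 2)) (i : ℕ) :
    v i - v (i + 1) = r ^ i := by
  induction i with
  | zero => rw [h0]; ring
  | succ i ih => linear_combination hrec i + r * ih

section MG1

variable {z : ℝ}

theorem mG1_zero_apply (j : ℕ) : mG1 z 0 j = ENNReal.ofReal ((z - 1) / z ^ (j + 1)) := rfl

/-- With truncated subtraction this also covers `i = 0`: rows `0` and `1` coincide. -/
theorem mG1_of_le {i j : ℕ} (h : i - 1 ≤ j) : mG1 z i j = mG1 z 0 (j - (i - 1)) := by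
  rcases Nat.eq_zero_or_pos i with rfl | hi
  · rfl
  · simp [mG1, hi.ne', h]

theorem mG1_of_lt {i j : ℕ} (h : j < i - 1) : mG1 z i j = 0 := by
  simp [mG1, show i ≠ 0 by omega, show ¬ i - 1 ≤ j by omega]

theorem mG1_zero_add (hz : 0 < z) (a k : ℕ) :
    mG1 z 0 (a + k) = ENNReal.ofReal (z⁻¹ ^ a) * mG1 z 0 k := by
  rw [mG1_zero_apply, mG1_zero_apply, ← ENNReal.ofReal_mul (by positivity)]
  congr 1
  rw [inv_pow, add_assoc, pow_add]
  field_simp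

theorem tsum_mG1_zero_mul_pow (hz : 1 < z) {s : ℝ} (hs : 0 ≤ s) (hsz : s < z) :
    ∑' k, mG1 z 0 k * ENNReal.ofReal (s ^ k) = ENNReal.ofReal ((z - 1) / (z - s)) := by
  have hz0 : 0 < z := by linarith
  have hq : s / z < 1 := (div_lt_one hz0).2 hsz
  have hterm : ∀ k, mG1 z 0 k * ENNReal.ofReal (s ^ k)
      = ENNReal.ofReal ((z - 1) / z * (s / z) ^ k) := fun k => by
    rw [mG1_zero_apply, ← ENNReal.ofReal_mul (div_nonneg (by linarith) (by positivity))]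
    congr 1
    rw [div_pow, pow_succ]
    field_simp
  simp_rw [hterm]
  rw [← ENNReal.ofReal_tsum_of_nonneg (fun k => by have := sub_pos.2 hz; positivity)
      ((summable_geometric_of_lt_one (by positivity) hq).mul_left _),
    tsum_mul_left, tsum_geometric_of_lt_one (by positivity) hq]
  congr 1
  field_simp [(sub_pos.2 hsz).ne']

theorem tsum_mG1_zero (hz : 1 < z) : ∑' k, mG1 z 0 k = 1 := by
  simpa [div_self (sub_pos.2 hz).ne'] using tsum_mG1_zero_mul_pow hz zero_le_one hz

theorem tsum_mG1_mul (i : ℕ) (f : ℕ → ℝ≥0∞) :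
    ∑' l, mG1 z i l * f l = ∑' k, mG1 z 0 k * f (i - 1 + k) := by
  rw [← ENNReal.summable.sum_add_tsum_nat_add' (k := i - 1),
    Finset.sum_eq_zero fun l hl => by rw [mG1_of_lt (Finset.mem_range.1 hl), zero_mul], zero_add]
  congr 1
  ext k
  rw [mG1_of_le le_add_self, Nat.add_sub_cancel, add_comm]

theorem tsum_mG1_zero_mul_eq (hz : 0 < z) (f : ℕ → ℝ≥0∞) :
    ∑' k, mG1 z 0 k * f k
      = mG1 z 0 0 * f 0 + ENNReal.ofReal z⁻¹ * ∑' k, mG1 z 0 k * f (k + 1) := by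
  rw [tsum_eq_zero_add' ENNReal.summable, ← ENNReal.tsum_mul_left]
  refine congrArg (_ + ·) (tsum_congr fun k => ?_)
  rw [add_comm k, mG1_zero_add hz, pow_one, mul_assoc]

theorem tsum_mG1_mul_pow (hz : 1 < z) {s : ℝ} (hs : 0 ≤ s) (hsz : s < z) (i : ℕ) :
    ∑' l, mG1 z i l * ENNReal.ofReal (s ^ l)
      = ENNReal.ofReal (s ^ (i - 1) * ((z - 1) / (z - s))) := by
  rw [tsum_mG1_mul]
  simp_rw [pow_add, ENNReal.ofReal_mul (pow_nonneg hs _), mul_left_comm _ (ENNReal.ofReal _),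
    ENNReal.tsum_mul_left, tsum_mG1_zero_mul_pow hz hs hsz]

theorem Pplus_mG1 (hz : 1 < z) {m k : ℕ} (h : m - 1 ≤ k) :
    Pplus (mG1 z) m k = ENNReal.ofReal (z⁻¹ ^ (k - (m - 1))) := by
  have hshift : ∀ l, mG1 z m (k + l) = ENNReal.ofReal (z⁻¹ ^ (k - (m - 1))) * mG1 z 0 l := by
    intro l
    rw [mG1_of_le (h.trans le_self_add), Nat.sub_add_comm h, mG1_zero_add (by linarith)]
  rw [Pplus]
  simp_rw [hshift]
  rw [ENNReal.tsum_mul_left, tsum_mG1_zero hz, mul_one]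

theorem mG1_sub_one (m : ℕ) : mG1 z m (m - 1) = ENNReal.ofReal ((z - 1) / z) := by
  rw [mG1_of_le le_rfl, Nat.sub_self, mG1_zero_apply, zero_add, pow_one]

noncomputable def mG1H (z : ℝ) (n m : ℕ) : ℝ :=
  if n ≤ m then 1 else (z - 1) ^ m / (z * (z - 1) ^ n)

theorem mG1H_nonneg (hz : 1 < z) (n m : ℕ) : 0 ≤ mG1H z n m := by
  have := sub_pos.2 hz
  unfold mG1H
  split_ifs <;> positivity

theorem mG1H_mul_of_lt (hz : 1 < z) {n m : ℕ} (h : m < n) :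
    mG1H z n m * (z * (z - 1) ^ n) = (z - 1) ^ m := by
  have := sub_pos.2 hz
  rw [mG1H, if_neg h.not_ge, div_mul_cancel₀ _ (by positivity)]

theorem sum_Ioc_inv_pow_mul_mG1H (hz : 1 < z) {m n : ℕ} (h : m < n) :
    ∑ k ∈ Finset.Ioc m n, z⁻¹ ^ (k + 1 - m) * mG1H z n k = (z - 1) / z * mG1H z n m := by
  have hz0 : z ≠ 0 := by positivity
  have hz1 : z - 1 ≠ 0 := (sub_pos.2 hz).ne'
  obtain ⟨d, rfl⟩ : ∃ d, n = m + d + 1 := ⟨n - m - 1, by omega⟩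
  induction d generalizing m with
  | zero =>
    rw [add_zero, Nat.Ioc_succ_singleton, Finset.sum_singleton, show m + 1 + 1 - m = 2 by omega,
      mG1H, mG1H, if_pos le_rfl, if_neg (by omega)]
    field_simp
    ring
  | succ d ih =>
    rw [← Finset.insert_Ioc_add_one_left_eq_Ioc (by omega), Finset.sum_insert (by simp)]
    have hrest : ∑ k ∈ Finset.Ioc (m + 1) (m + (d + 1) + 1),
          z⁻¹ ^ (k + 1 - m) * mG1H z (m + (d + 1) + 1) k
        = z⁻¹ * ((z - 1) / z * mG1H z (m + (d + 1) + 1) (m + 1)) := by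
      rw [show m + (d + 1) + 1 = m + 1 + d + 1 by ring, ← ih (by omega), Finset.mul_sum]
      refine Finset.sum_congr rfl fun k hk => ?_
      rw [show k + 1 - m = k + 1 - (m + 1) + 1 by simp at hk; omega, pow_succ]
      ring
    rw [hrest, show m + 1 + 1 - m = 2 by omega, mG1H, mG1H, if_neg (by omega), if_neg (by omega)]
    field_simp
    ring

theorem H_mG1 (hz : 1 < z) {n m : ℕ} (hm : 1 ≤ m) :
    H (mG1 z) n m = ENNReal.ofReal (mG1H z n m) := by
  rcases le_or_gt n m with h | h
  · rw [H_of_le _ h, mG1H, if_pos h, ENNReal.ofReal_one]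
  · have hterm : ∀ k ∈ Finset.Ioc m n, Pplus (mG1 z) m k * H (mG1 z) n k
        = ENNReal.ofReal (z⁻¹ ^ (k + 1 - m) * mG1H z n k) := fun k hk => by
      have hk := Finset.mem_Ioc.1 hk
      rw [Pplus_mG1 hz (by omega), H_mG1 hz (by omega), show k - (m - 1) = k + 1 - m by omega,
        ← ENNReal.ofReal_mul (by positivity)]
    have hz1 := sub_pos.2 hz
    rw [H_of_lt _ h, Finset.sum_congr rfl hterm, mG1_sub_one,
      ← ENNReal.ofReal_sum_of_nonneg fun k _ => mul_nonneg (by positivity) (mG1H_nonneg hz n k),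
      sum_Ioc_inv_pow_mul_mG1H hz h, ← ENNReal.ofReal_inv_of_pos (by positivity),
      ← ENNReal.ofReal_mul (by positivity), inv_mul_cancel_left₀ (by positivity)]
termination_by n - m
decreasing_by omega

theorem ratio_mG1_eq_div (hz : 1 < z) (i n : ℕ) :
    ratio (mG1 z) i n = (∑ m ∈ Finset.Icc (i + 1) n, mG1H z n m) /
      ∑ k ∈ Finset.Icc 1 n, z⁻¹ ^ k * mG1H z n k := by
  have hPplus : ∀ k, Pplus (mG1 z) 0 k = ENNReal.ofReal (z⁻¹ ^ k) := fun k => by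
    simpa using Pplus_mG1 hz (m := 0) (k := k) (by simp)
  have hH : ∀ m ∈ Finset.Icc 1 n, (H (mG1 z) n m).toReal = mG1H z n m := fun m hm => by
    rw [H_mG1 hz (Finset.mem_Icc.1 hm).1, ENNReal.toReal_ofReal (mG1H_nonneg hz n m)]
  have hz0 : 0 < z := by linarith
  rw [ratio]
  congr 1
  · exact Finset.sum_congr rfl fun m hm => hH m (Finset.Icc_subset_Icc_left le_add_self hm)
  · exact Finset.sum_congr rfl fun k hk => by
      rw [hPplus, hH k hk, ENNReal.toReal_ofReal (by positivity)]

theorem sum_mG1H_mul (hz : 1 < z) {i n : ℕ} (h : i < n) :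
    (∑ m ∈ Finset.Icc (i + 1) n, mG1H z n m) * (z * (z - 1) ^ n)
      = (z - 1) * ∑ m ∈ Finset.Ico i (n + 1), (z - 1) ^ m := by
  rw [← Finset.Ico_insert_right h, Finset.sum_insert (by simp), add_mul, Finset.sum_mul,
    Finset.sum_congr rfl fun m hm => mG1H_mul_of_lt hz (Finset.mem_Ico.1 hm).2,
    Finset.mul_sum, mG1H, if_pos le_rfl]
  simp_rw [← pow_succ']
  rw [Finset.sum_Ico_add' (fun m => (z - 1) ^ m), Finset.sum_Ico_succ_top (by omega),
    Finset.sum_Ico_succ_top (by omega)]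
  ring

theorem sum_inv_pow_mul_mG1H_mul (hz : 1 < z) {n : ℕ} (hn : 1 ≤ n) :
    (∑ k ∈ Finset.Icc 1 n, z⁻¹ ^ k * mG1H z n k) * (z * (z - 1) ^ n) = z - 1 := by
  have hz0 : z ≠ 0 := by positivity
  have hx : z⁻¹ * (z - 1) - 1 = -z⁻¹ := by field_simp; ring
  rw [← Finset.Ico_insert_right hn, Finset.sum_insert (by simp), add_mul, Finset.sum_mul,
    Finset.sum_congr rfl fun k hk => by
      rw [mul_assoc, mG1H_mul_of_lt hz (Finset.mem_Ico.1 hk).2, ← mul_pow],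
    geom_sum_Ico (sub_ne_zero.1 (hx ▸ neg_ne_zero.2 (inv_ne_zero hz0))) hn, hx, mG1H,
    if_pos le_rfl, mul_pow]
  field_simp
  ring

theorem ratio_mG1_eq (hz : 1 < z) {i n : ℕ} (h : i < n) :
    ratio (mG1 z) i n = ∑ m ∈ Finset.Ico i (n + 1), (z - 1) ^ m := by
  have hK : z * (z - 1) ^ n ≠ 0 := by have := sub_pos.2 hz; positivity
  have hden := sum_inv_pow_mul_mG1H_mul hz (n := n) (by omega)
  have hden0 : ∑ k ∈ Finset.Icc 1 n, z⁻¹ ^ k * mG1H z n k ≠ 0 := by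
    rintro h0
    rw [h0, zero_mul] at hden
    linarith
  rw [ratio_mG1_eq_div hz, div_eq_iff hden0]
  refine mul_right_cancel₀ hK ?_
  linear_combination sum_mG1H_mul hz h - (∑ m ∈ Finset.Ico i (n + 1), (z - 1) ^ m) * hden

theorem green_mG1_lt_top (hz : 1 < z) (hz2 : z < 2) (i j : ℕ) : green (mG1 z) i j < ∞ := by
  have hq : (z - 1) / (z - z / 2) < 1 := by rw [div_lt_one (by linarith)]; linarith
  have hq' : (z - 1) / (z - z / 2) < z / 2 := by
    rw [div_lt_iff₀ (by linarith)]; nlinarith [sq_pos_of_pos (by linarith : 0 < 2 - z)]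
  -- `l ↦ s ^ l` is strictly superharmonic exactly when `z - 1 < s < 1`
  refine green_lt_top_of_tsum_lt _ (h := fun l => ENNReal.ofReal ((z / 2) ^ l))
    (fun _ => ENNReal.ofReal_ne_top) (fun i => ?_) i j
  rw [tsum_mG1_mul_pow hz (by positivity) (by linarith),
    ENNReal.ofReal_lt_ofReal_iff (by positivity)]
  rcases i with _ | i
  · simpa using hq
  · rw [Nat.add_sub_cancel, pow_succ]
    exact mul_lt_mul_of_pos_left hq' (by positivity)

theorem green_mG1_zero_zero : green (mG1 z) 0 0 = 1 + green (mG1 z) 1 0 := by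
  rw [green_eq_ite_add_tsum, green_eq_ite_add_tsum _ 1, tsum_mG1_mul 0, tsum_mG1_mul 1]
  simp

theorem green_mG1_succ_zero (hz : 0 < z) (i : ℕ) :
    green (mG1 z) (i + 1) 0 = ENNReal.ofReal ((z - 1) / z) * green (mG1 z) i 0
      + ENNReal.ofReal z⁻¹ * green (mG1 z) (i + 2) 0 := by
  rw [green_eq_ite_add_tsum, green_eq_ite_add_tsum _ (i + 2), tsum_mG1_mul (i + 1),
    tsum_mG1_mul (i + 2), tsum_mG1_zero_mul_eq hz, mG1_zero_apply]
  simp [add_right_comm i 1, add_assoc]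

theorem exists_green_mG1_eq_top (hz : 2 ≤ z) : ∃ i, green (mG1 z) i 0 = ∞ := by
  by_contra! hfin
  set v : ℕ → ℝ := fun i => (green (mG1 z) i 0).toReal
  have hv0 : v 0 = 1 + v 1 := by
    simp only [v, green_mG1_zero_zero, ENNReal.toReal_add ENNReal.one_ne_top (hfin 1),
      ENNReal.toReal_one]
  have hvrec : ∀ i, (1 + (z - 1)) * v (i + 1) = (z - 1) * v i + v (i + 2) := fun i => by
    have h := congrArg ENNReal.toReal (green_mG1_succ_zero (z := z) (by linarith) i)
    rw [ENNReal.toReal_add (ENNReal.mul_ne_top ENNReal.ofReal_ne_top (hfin _))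
      (ENNReal.mul_ne_top ENNReal.ofReal_ne_top (hfin _)), ENNReal.toReal_mul, ENNReal.toReal_mul,
      ENNReal.toReal_ofReal (div_nonneg (by linarith) (by linarith)),
      ENNReal.toReal_ofReal (inv_nonneg.2 (by linarith))] at h
    field_simp at h
    linear_combination h
  obtain ⟨n, hn⟩ := exists_nat_gt (v 0)
  have hsum : v 0 - v n = ∑ t ∈ Finset.range n, (z - 1) ^ t := by
    rw [← Finset.sum_range_sub']
    exact Finset.sum_congr rfl fun t _ => sub_succ_eq_pow_of_recurrence hv0 hvrec t
  have hn_le : (n : ℝ) ≤ ∑ t ∈ Finset.range n, (z - 1) ^ t := by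
    simpa using Finset.card_nsmul_le_sum (Finset.range n) ((z - 1) ^ ·) 1
      fun t _ => one_le_pow₀ (by linarith)
  linarith [show 0 ≤ v n from ENNReal.toReal_nonneg]

end MG1

theorem mG1_ratio_limits_and_transience (z : ℝ) (hz : 1 < z) :
    (z < 2 → ∀ i : ℕ,
      Tendsto (fun n => ratio (mG1 z) i n) atTop (𝓝 ((z - 1) ^ i / (2 - z)))) ∧
    (2 ≤ z → ∀ i : ℕ, Tendsto (fun n => ratio (mG1 z) i n) atTop atTop) ∧
    ((∀ i j : ℕ, green (mG1 z) i j < ∞) ↔ z < 2) := by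
  have hratio : ∀ i, (fun n => ∑ m ∈ Finset.Ico i (n + 1), (z - 1) ^ m)
      =ᶠ[atTop] fun n => ratio (mG1 z) i n :=
    fun i => (eventually_gt_atTop i).mono fun n hn => (ratio_mG1_eq hz hn).symm
  refine ⟨fun hz2 i => ?_, fun hz2 i => ?_, fun hfin => ?_, green_mG1_lt_top hz⟩
  · have h := tendsto_sum_Ico_pow_of_lt_one (sub_nonneg.2 hz.le) (by linarith) i
    rw [show 1 - (z - 1) = 2 - z by ring] at h
    exact h.congr' (hratio i)
  · exact (tendsto_sum_Ico_pow_atTop (by linarith) i).congr' (hratio i)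
  · by_contra! hz2
    obtain ⟨i, hi⟩ := exists_green_mG1_eq_top hz2
    exact (hfin i 0).ne hi
end
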